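/- Let (X, d) be a proper, uniquely geodesic, straight metric space with basepoint b, let ξ lie in the horoboundary of X, and let (x_n) be a sequence in X with h(x_n) → ξ in C(X, ℝ). Then x_n ≠ b for all sufficiently large n, and the unique geodesic rays γ_n based at b passing through x_n converge in D_b (uniformly on compact sets) to the unique geodesic ray γ based at b satisfying ξ(γ(t)) = −t for all t ≥ 0; in particular this limit ray depends only on ξ and not on the chosen sequence (x_n). -/

import Mathlib

open Filter Topology
open scoped NNReal ENNReal

variable {X : Type*} [MetricSpace X]

/-- `γ` restricted to the set `s ⊆ ℝ` is a (unit-speed) geodesic: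
`dist (γ u) (γ v) = |u - v|` for all `u, v ∈ s`. -/
def IsGeodesicOn (γ : ℝ → X) (s : Set ℝ) : Prop :=
  ∀ u ∈ s, ∀ v ∈ s, dist (γ u) (γ v) = |u - v|

/-- `X` is uniquely geodesic: any two distinct points are joined by a geodesic
parametrized on `[0, dist a c]`, and any two such geodesics agree on that interval. -/
def UniquelyGeodesic (X : Type*) [MetricSpace X] : Prop :=
  ∀ a c : X, a ≠ c →
    ∃ γ : ℝ → X,
      (IsGeodesicOn γ (Set.Icc 0 (dist a c)) ∧ γ 0 = a ∧ γ (dist a c) = c) ∧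
        ∀ γ' : ℝ → X,
          (IsGeodesicOn γ' (Set.Icc 0 (dist a c)) ∧ γ' 0 = a ∧ γ' (dist a c) = c) →
            Set.EqOn γ' γ (Set.Icc 0 (dist a c))

/-- `X` is straight: every geodesic defined on a nondegenerate closed interval extends to a
unique bi-infinite geodesic (an isometric embedding of `ℝ`). -/
def Straight (X : Type*) [MetricSpace X] : Prop :=
  ∀ (γ : ℝ → X) (a c : ℝ), a < c → IsGeodesicOn γ (Set.Icc a c) →
    ∃! γ' : ℝ → X, Isometry γ' ∧ Set.EqOn γ' γ (Set.Icc a c)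

/-- The space `D_b` of geodesic rays based at `b`, as a subspace of `C(ℝ≥0, X)`
(with the compact-open topology, i.e. uniform convergence on compact sets). -/
abbrev GeodesicRay (X : Type*) [MetricSpace X] (b : X) :=
  {γ : C(ℝ≥0, X) // Isometry ⇑γ ∧ γ 0 = b}

/-- The horofunction embedding `h : X → C(X, ℝ)`, `h x y = d(x, y) - d(x, b)`. -/
noncomputable def horo (b x : X) : C(X, ℝ) :=
  ⟨fun y => dist x y - dist x b,
    (continuous_const.dist continuous_id).sub continuous_const⟩

/-- The horoboundary of `X` (with basepoint `b`): the closure of `h(X)` in `C(X, ℝ)`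
minus `h(X)`. -/
def horoboundary (b : X) : Set C(X, ℝ) :=
  closure (Set.range (horo b)) \ Set.range (horo b)

/-- The setoid on `D_b × M` identifying all points whose second coordinate is `0`. -/
def collapseSetoid (X : Type*) [MetricSpace X] (b : X) (M : Type*) [Zero M] :
    Setoid (GeodesicRay X b × M) where
  r p q := p = q ∨ (p.2 = 0 ∧ q.2 = 0)
  iseqv := by
    refine ⟨fun _ => Or.inl rfl, ?_, ?_⟩
    · rintro p q (rfl | ⟨h1, h2⟩)
      · exact Or.inl rfl
      · exact Or.inr ⟨h2, h1⟩
    · rintro p q r (rfl | ⟨h1, h2⟩) (rfl | ⟨h3, h4⟩)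
      · exact Or.inl rfl
      · exact Or.inr ⟨h3, h4⟩
      · exact Or.inr ⟨h1, h2⟩
      · exact Or.inr ⟨h1, h4⟩

/-- The visual compactification `X̄_b = (D_b × [0, ∞]) / (D_b × {0})`. -/
abbrev VisualCompactification (X : Type*) [MetricSpace X] (b : X) :=
  Quotient (collapseSetoid X b ℝ≥0∞)

/-- `X` is C¹ along geodesics: for a bi-infinite geodesic `γ` and a point `p` off `γ`,
`t ↦ d(γ t, p)` is differentiable, and the derivative depends continuously on `(t, p)`. -/
def C1AlongGeodesics (X : Type*) [MetricSpace X] : Prop :=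
  ∀ γ : ℝ → X, Isometry γ →
    (∀ p, p ∉ Set.range γ → ∀ t : ℝ, DifferentiableAt ℝ (fun s => dist (γ s) p) t) ∧
      ContinuousOn (fun q : ℝ × X => deriv (fun s => dist (γ s) q.2) q.1)
        {q : ℝ × X | q.2 ∉ Set.range γ}

/-- `X` has constant distance variation: for distinct bi-infinite geodesics `γ, η` with
`γ 0 = η 0`, either `(d/dt) d(γ t, η s)|_{t=0}` exists for all `s > 0` and is independent
of `s`, or it exists for no `s > 0`. -/
def ConstantDistanceVariation (X : Type*) [MetricSpace X] : Prop :=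
  ∀ γ η : ℝ → X, Isometry γ → Isometry η → γ 0 = η 0 → γ ≠ η →
    ((∀ s : ℝ, 0 < s → DifferentiableAt ℝ (fun t => dist (γ t) (η s)) 0) ∧
        ∀ s s' : ℝ, 0 < s → 0 < s' →
          deriv (fun t => dist (γ t) (η s)) 0 = deriv (fun t => dist (γ t) (η s')) 0) ∨
      ∀ s : ℝ, 0 < s → ¬ DifferentiableAt ℝ (fun t => dist (γ t) (η s)) 0

/-!
Since `ξ` is not of the form `h(y)`, no subsequence of `x_n` stays bounded, so `d(b, x_n) → ∞`.
For each `v`, the points at time `v` on the geodesic lines through `b` and `x_n` then accumulate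
only at points `w` with `d(b, w) = |v|` and `ξ w = -v`. Taking `v = -1` yields a point `w` with
`ξ w = 1`. As `ξ` is `1`-Lipschitz with `ξ b = 0`, every `z` with `d(b, z) = t` and `ξ z = -t`
satisfies `d(w, z) = d(w, b) + d(b, z)`, and in a uniquely geodesic straight space this puts `z`
on the line through `w` and `b`, at time `t` past `b`. Hence these points form one geodesic ray,
which is the only possible cluster point of `γ_n(t)`; the rays are `1`-Lipschitz, so pointwise
convergence is uniform on compact sets.
-/

open Metric Set

theorem Isometry.isGeodesicOn {g : ℝ → X} (hg : Isometry g) (s : Set ℝ) : IsGeodesicOn g s :=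
  fun u _ v _ => by rw [hg.dist_eq, Real.dist_eq]

theorem Straight.eq_of_eqOn {g g' : ℝ → X} (hS : Straight X) (hg : Isometry g)
    (hg' : Isometry g') {a c : ℝ} (hac : a < c) (h : EqOn g g' (Icc a c)) : g = g' := by
  obtain ⟨γ, -, huniq⟩ := hS g a c hac (hg.isGeodesicOn _)
  exact (huniq g ⟨hg, eqOn_refl _ _⟩).trans (huniq g' ⟨hg', h.symm⟩).symm

theorem Isometry.dist_apply_of_le {f : ℝ → X} (hf : Isometry f) {s t : ℝ} (hst : s ≤ t) :
    dist (f s) (f t) = t - s := by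
  rw [hf.dist_eq, Real.dist_eq, abs_sub_comm, abs_of_nonneg (by linarith)]

theorem exists_isometry_apply_eq_of_ne (hU : UniquelyGeodesic X) (hS : Straight X) {a c : X}
    (h : a ≠ c) (s : ℝ) :
    ∃ G : ℝ → X, Isometry G ∧ G s = a ∧ G (s + dist a c) = c := by
  have hac : 0 < dist a c := dist_pos.2 h
  obtain ⟨γ, ⟨hγ, hγa, hγc⟩, -⟩ := hU a c h
  obtain ⟨G, ⟨hG, hGγ⟩, -⟩ := hS γ 0 (dist a c) hac hγ
  refine ⟨G ∘ (IsometryEquiv.subRight s), hG.comp (IsometryEquiv.subRight s).isometry, ?_, ?_⟩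
  · simpa [hγa] using hGγ (left_mem_Icc.2 hac.le)
  · simpa [hγc] using hGγ (right_mem_Icc.2 hac.le)

theorem isGeodesicOn_ite {g e : ℝ → X} (hg : Isometry g) (he : Isometry e) {α β γ : ℝ}
    (hβ : g β = e β) (hαγ : dist (g α) (e γ) = γ - α) :
    IsGeodesicOn (fun t => if t ≤ β then g t else e t) (Icc α γ) := by
  have key : ∀ u ∈ Icc α γ, ∀ v ∈ Icc α γ, u ≤ v →
      dist (if u ≤ β then g u else e u) (if v ≤ β then g v else e v) = v - u := by
    intro u hu v hv huv
    by_cases hvβ : v ≤ β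
    · simp only [huv.trans hvβ, hvβ, if_true]
      exact hg.dist_apply_of_le huv
    by_cases huβ : u ≤ β
    · simp only [huβ, hvβ, if_true, if_false]
      apply le_antisymm
      · calc dist (g u) (e v) ≤ dist (g u) (g β) + dist (e β) (e v) := by
              rw [hβ]; exact dist_triangle _ _ _
          _ = v - u := by
            rw [hg.dist_apply_of_le huβ, he.dist_apply_of_le (not_le.1 hvβ).le]; ring
      · have := dist_triangle4 (g α) (g u) (e v) (e γ)
        rw [hαγ, hg.dist_apply_of_le hu.1, he.dist_apply_of_le hv.2] at this
        linarith
    · simp only [huβ, hvβ, if_false]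
      exact he.dist_apply_of_le huv
  intro u hu v hv
  rcases le_total u v with huv | hvu
  · rw [key u hu v hv huv, abs_sub_comm, abs_of_nonneg (by linarith)]
  · rw [dist_comm, key v hv u hu hvu, abs_of_nonneg (by linarith)]

theorem Straight.eq_of_dist_eq_add (hU : UniquelyGeodesic X) (hS : Straight X) {G : ℝ → X}
    (hG : Isometry G) {α β : ℝ} (hαβ : α < β) {z : X}
    (hz : dist (G α) z = (β - α) + dist (G β) z) : z = G (β + dist (G β) z) := by
  rcases eq_or_ne (G β) z with rfl | hne
  · rw [dist_self, add_zero]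
  obtain ⟨E, hE, hEβ, hEz⟩ := exists_isometry_apply_eq_of_ne hU hS hne β
  set d := dist (G β) z
  have hd : 0 < d := dist_pos.2 hne
  -- `G` on `[α, β]` followed by the segment from `G β` to `z` is a geodesic; its straight
  -- extension agrees with `G` on `[α, β]`, hence is `G`.
  obtain ⟨C, ⟨hC, hCc⟩, -⟩ := hS _ α (β + d) (by linarith) <|
    isGeodesicOn_ite hG hE hEβ.symm (by rw [hEz, hz]; ring)
  have hCG : C = G := hS.eq_of_eqOn hC hG hαβ fun t ht => by
    simpa [ht.2] using hCc ⟨ht.1, ht.2.trans (by linarith)⟩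
  have hCz : C (β + d) = z := by
    simpa [hd.not_ge, hEz] using hCc ⟨by linarith, le_rfl⟩
  rw [← hCG, hCz]

theorem Straight.eq_of_lipschitzWith (hU : UniquelyGeodesic X) (hS : Straight X) {f : X → ℝ}
    (hf : LipschitzWith 1 f) {G : ℝ → X} (hG : Isometry G) {α β : ℝ} (hαβ : α < β)
    (hGf : f (G α) - f (G β) = β - α) {z : X} (hz : f (G β) - f z = dist (G β) z) :
    z = G (β + dist (G β) z) := by
  refine hS.eq_of_dist_eq_add hU hG hαβ (le_antisymm ?_ ?_)
  · calc dist (G α) z ≤ dist (G α) (G β) + dist (G β) z := dist_triangle _ _ _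
      _ = (β - α) + dist (G β) z := by rw [hG.dist_apply_of_le hαβ.le]
  · calc (β - α) + dist (G β) z = f (G α) - f z := by rw [← hGf, ← hz]; ring
      _ ≤ dist (G α) z :=
        (le_abs_self _).trans (by simpa [Real.dist_eq] using hf.dist_le_mul (G α) z)

@[simp]
theorem horo_apply (b x y : X) : horo b x y = dist x y - dist x b := rfl

theorem lipschitzWith_horo (b x : X) : LipschitzWith 1 (horo b x) :=
  LipschitzWith.of_dist_le_mul fun y z => by
    simpa using dist_dist_dist_le_right x y z

theorem continuous_horo (b : X) : Continuous (horo b) :=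
  ContinuousMap.continuous_of_continuous_uncurry _ <| by
    simp only [horo_apply]
    fun_prop

theorem lipschitzWith_of_mem_closure_range_horo {b : X} {ξ : C(X, ℝ)}
    (hξ : ξ ∈ closure (range (horo b))) : LipschitzWith 1 ξ := by
  refine closure_minimal ?_ ((isClosed_setOfPred_lipschitzWith 1).preimage continuous_coeFun) hξ
  rintro _ ⟨x, rfl⟩
  exact lipschitzWith_horo b x

theorem apply_self_eq_zero_of_mem_closure_range_horo {b : X} {ξ : C(X, ℝ)}
    (hξ : ξ ∈ closure (range (horo b))) : ξ b = 0 := by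
  refine closure_minimal ?_ (isClosed_eq (continuous_eval_const b) continuous_const) hξ
  rintro _ ⟨x, rfl⟩
  simp

section

variable {b : X} {ξ : C(X, ℝ)} {x : ℕ → X}

theorem tendsto_dist_sub_dist_of_tendsto_horo
    (hx : Tendsto (fun n => horo b (x n)) atTop (𝓝 ξ)) {y : ℕ → X} {w : X}
    (hy : Tendsto y atTop (𝓝 w)) :
    Tendsto (fun n => dist (x n) (y n) - dist (x n) b) atTop (𝓝 (ξ w)) := by
  have hw : Tendsto (fun n => horo b (x n) w) atTop (𝓝 (ξ w)) :=
    ((continuous_eval_const w).tendsto ξ).comp hx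
  refine tendsto_of_tendsto_of_dist hw (squeeze_zero (fun _ => dist_nonneg) (fun n => ?_)
    (tendsto_iff_dist_tendsto_zero.1 hy))
  simpa [dist_comm w] using (lipschitzWith_horo b (x n)).dist_le_mul w (y n)

theorem tendsto_dist_atTop_of_mem_horoboundary [ProperSpace X] (hξ : ξ ∈ horoboundary b)
    (hx : Tendsto (fun n => horo b (x n)) atTop (𝓝 ξ)) :
    Tendsto (fun n => dist b (x n)) atTop atTop := by
  refine tendsto_atTop.2 fun R => ?_
  by_contra hR
  obtain ⟨y, -, hy⟩ := (isCompact_closedBall b R).exists_mapClusterPt_of_frequently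
    (not_eventually.1 hR |>.mono fun n hn => by simpa [dist_comm] using (not_le.1 hn).le)
  obtain ⟨ψ, hψ, hxy⟩ := hy.tendsto_subseq
  have : ξ = horo b y :=
    tendsto_nhds_unique (hx.comp hψ.tendsto_atTop) (((continuous_horo b).tendsto y).comp hxy)
  exact hξ.2 ⟨y, this.symm⟩

theorem dist_eq_abs_and_apply_eq_neg_of_mapClusterPt
    (hx : Tendsto (fun n => horo b (x n)) atTop (𝓝 ξ)) {y : ℕ → X} {v : ℝ}
    (hy : ∀ᶠ n in atTop, dist b (y n) = |v| ∧ dist (y n) (x n) = dist b (x n) - v)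
    {w : X} (hw : MapClusterPt w atTop y) : dist b w = |v| ∧ ξ w = -v := by
  obtain ⟨ψ, hψ, hyw⟩ := hw.tendsto_subseq
  have hyψ := hψ.tendsto_atTop.eventually hy
  refine ⟨tendsto_nhds_unique (tendsto_const_nhds.dist hyw) ?_, tendsto_nhds_unique
    (tendsto_dist_sub_dist_of_tendsto_horo (hx.comp hψ.tendsto_atTop) hyw) ?_⟩
  · exact tendsto_const_nhds.congr' (hyψ.mono fun n hn => hn.1.symm)
  · refine tendsto_const_nhds.congr' (hyψ.mono fun n hn => ?_)
    simp only [Function.comp_apply, dist_comm (x (ψ n)), hn.2]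
    ring

theorem exists_dist_eq_abs_and_apply_eq_neg [ProperSpace X] (hU : UniquelyGeodesic X)
    (hS : Straight X) (hx : Tendsto (fun n => horo b (x n)) atTop (𝓝 ξ))
    (hd : Tendsto (fun n => dist b (x n)) atTop atTop) (v : ℝ) :
    ∃ w, dist b w = |v| ∧ ξ w = -v := by
  have hline : ∀ n, ∃ y : X,
      b ≠ x n → dist b y = |v| ∧ dist y (x n) = |dist b (x n) - v| := by
    intro n
    by_cases hn : b ≠ x n
    · obtain ⟨G, hG, hGb, hGx⟩ := exists_isometry_apply_eq_of_ne hU hS hn 0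
      refine ⟨G v, fun _ => ⟨?_, ?_⟩⟩
      · rw [← hGb, hG.dist_eq, Real.dist_eq, zero_sub, abs_neg]
      · conv_lhs => rw [← hGx]
        rw [hG.dist_eq, Real.dist_eq, zero_add, abs_sub_comm]
    · exact ⟨b, fun h => absurd h hn⟩
  choose y hy using hline
  have hy' : ∀ᶠ n in atTop, dist b (y n) = |v| ∧ dist (y n) (x n) = dist b (x n) - v := by
    filter_upwards [hd.eventually_gt_atTop (max v 0)] with n hn
    obtain ⟨h1, h2⟩ := hy n (dist_pos.1 ((le_max_right _ _).trans_lt hn))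
    exact ⟨h1, h2.trans (abs_of_pos (by linarith [le_max_left v 0]))⟩
  obtain ⟨w, -, hw⟩ := (isCompact_closedBall b |v|).exists_mapClusterPt_of_frequently
    (hy'.mono fun n hn => by rw [mem_closedBall, dist_comm, hn.1]).frequently
  exact ⟨w, dist_eq_abs_and_apply_eq_neg_of_mapClusterPt hx hy' hw⟩

theorem tendsto_of_forall_dist_eq_abs_and_apply_eq_neg [ProperSpace X]
    (hx : Tendsto (fun n => horo b (x n)) atTop (𝓝 ξ)) {y : ℕ → X} {v : ℝ}
    (hy : ∀ᶠ n in atTop, dist b (y n) = |v| ∧ dist (y n) (x n) = dist b (x n) - v)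
    {p : X} (hp : ∀ w, dist b w = |v| ∧ ξ w = -v → w = p) : Tendsto y atTop (𝓝 p) :=
  (isCompact_closedBall b |v|).tendsto_nhds_of_unique_mapClusterPt
    (hy.mono fun n hn => by rw [mem_closedBall, dist_comm, hn.1])
    fun w _ hw => hp w (dist_eq_abs_and_apply_eq_neg_of_mapClusterPt hx hy hw)

theorem exists_isometry_forall_dist_eq_and_apply_eq_iff [ProperSpace X] (hU : UniquelyGeodesic X)
    (hS : Straight X) (hξ : ξ ∈ horoboundary b)
    (hx : Tendsto (fun n => horo b (x n)) atTop (𝓝 ξ)) :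
    ∃ G : ℝ → X, Isometry G ∧ G 0 = b ∧
      ∀ t : ℝ, 0 ≤ t → ∀ z, dist b z = t ∧ ξ z = -t ↔ z = G t := by
  have hd := tendsto_dist_atTop_of_mem_horoboundary hξ hx
  obtain ⟨w, hbw, hξw⟩ := exists_dist_eq_abs_and_apply_eq_neg hU hS hx hd (-1)
  norm_num at hbw hξw
  obtain ⟨G, hG, hGw, hGb⟩ :=
    exists_isometry_apply_eq_of_ne hU hS (a := w) (c := b) (by rintro rfl; simp at hbw) (-1)
  rw [dist_comm, hbw, neg_add_cancel] at hGb
  have hξb := apply_self_eq_zero_of_mem_closure_range_horo hξ.1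
  have hforced : ∀ t z, dist b z = t → ξ z = -t → z = G t := by
    rintro t z rfl hz
    simpa [hGb] using hS.eq_of_lipschitzWith hU (lipschitzWith_of_mem_closure_range_horo hξ.1)
      hG neg_one_lt_zero (by simp [hGw, hGb, hξw, hξb]) (by simp [hGb, hξb, hz])
  refine ⟨G, hG, hGb, fun t ht z => ⟨fun h => hforced t z h.1 h.2, ?_⟩⟩
  rintro rfl
  obtain ⟨z, hbz, hz⟩ := exists_dist_eq_abs_and_apply_eq_neg hU hS hx hd t
  rw [abs_of_nonneg ht] at hbz
  rw [← hforced t z hbz hz]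
  exact ⟨hbz, hz⟩

namespace GeodesicRay

theorem dist_apply (γ : GeodesicRay X b) (s t : ℝ≥0) :
    dist (γ.1 s) (γ.1 t) = |(s : ℝ) - t| := by
  rw [γ.2.1.dist_eq, NNReal.dist_eq]

theorem dist_base_apply (γ : GeodesicRay X b) (t : ℝ≥0) : dist b (γ.1 t) = t := by
  simp [← γ.2.2, dist_apply]

theorem dist_apply_eq_sub_of_mem_range (γ : GeodesicRay X b) {t : ℝ≥0} {y : X}
    (hy : y ∈ range γ.1) (ht : (t : ℝ) ≤ dist b y) : dist (γ.1 t) y = dist b y - t := by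
  obtain ⟨s, rfl⟩ := hy
  rw [dist_base_apply] at ht ⊢
  rw [dist_apply, abs_sub_comm, abs_of_nonneg (by linarith)]

def ofIsometry {G : ℝ → X} (hG : Isometry G) (hG0 : G 0 = b) : GeodesicRay X b :=
  ⟨⟨fun t : ℝ≥0 => G t, hG.continuous.comp NNReal.continuous_coe⟩,
    hG.comp isometry_subtype_coe, by simpa using hG0⟩

theorem tendsto_nhds_of_tendsto_apply {ι : Type*} {l : Filter ι} {γn : ι → GeodesicRay X b}
    {γ : GeodesicRay X b} (h : ∀ t, Tendsto (fun n => (γn n).1 t) l (𝓝 (γ.1 t))) :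
    Tendsto γn l (𝓝 γ) := by
  rw [tendsto_subtype_rng, ContinuousMap.tendsto_iff_forall_isCompact_tendstoUniformlyOn]
  have hequi : Equicontinuous fun n => ⇑(γn n).1 :=
    (LipschitzWith.uniformEquicontinuous _ 1 fun n => (γn n).2.1.lipschitz).equicontinuous
  have := (EquicontinuousOn.tendsto_uniformOnFun_iff_pi (𝔖 := {K | IsCompact K})
    (fun K hK => hK) (sUnion_eq_univ_iff.2 fun t => ⟨{t}, isCompact_singleton, rfl⟩)
    (fun K _ => hequi.equicontinuousOn K) l γ.1).2 (tendsto_pi_nhds.2 h)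
  exact UniformOnFun.tendsto_iff_tendstoUniformlyOn.1 this

end GeodesicRay

end

/-- If `h (x_n) → ξ` with `ξ` in the horoboundary, then `x_n ≠ b` eventually,
there is a unique geodesic ray `γ` based at `b` with `ξ (γ t) = -t` for all `t`, and any
geodesic rays based at `b` passing through the `x_n` converge in `D_b` to that ray `γ`
(so the limit depends only on `ξ`). -/
theorem statement6 [ProperSpace X] (hU : UniquelyGeodesic X) (hS : Straight X) (b : X)
    (ξ : C(X, ℝ)) (hξ : ξ ∈ horoboundary b)
    (x : ℕ → X) (hx : Tendsto (fun n => horo b (x n)) atTop (𝓝 ξ)) :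
    (∀ᶠ n in atTop, x n ≠ b) ∧
    (∃! γ : GeodesicRay X b, ∀ t : ℝ≥0, ξ (γ.1 t) = -(t : ℝ)) ∧
    (∀ γn : ℕ → GeodesicRay X b, (∀ n, x n ∈ Set.range ⇑(γn n).1) →
      ∀ γ : GeodesicRay X b, (∀ t : ℝ≥0, ξ (γ.1 t) = -(t : ℝ)) →
        Tendsto γn atTop (𝓝 γ)) := by
  have hd := tendsto_dist_atTop_of_mem_horoboundary hξ hx
  obtain ⟨G, hG, hG0, hGξ⟩ := exists_isometry_forall_dist_eq_and_apply_eq_iff hU hS hξ hx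
  set ρ := GeodesicRay.ofIsometry hG hG0
  have hρ : ∀ γ : GeodesicRay X b, (∀ t : ℝ≥0, ξ (γ.1 t) = -(t : ℝ)) ↔ γ = ρ := by
    refine fun γ => ⟨fun hγ => Subtype.ext <| ContinuousMap.ext fun t => ?_, ?_⟩
    · exact (hGξ t t.2 _).1 ⟨γ.dist_base_apply t, hγ t⟩
    · rintro rfl t
      exact ((hGξ t t.2 _).2 rfl).2
  refine ⟨(hd.eventually_gt_atTop 0).mono fun n hn => (dist_pos.1 hn).symm,
    ⟨ρ, (hρ ρ).2 rfl, fun γ hγ => (hρ γ).1 hγ⟩, fun γn hγn γ hγ => ?_⟩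
  rw [(hρ γ).1 hγ]
  refine GeodesicRay.tendsto_nhds_of_tendsto_apply fun t =>
    tendsto_of_forall_dist_eq_abs_and_apply_eq_neg hx (v := t) ?_ fun w hw => ?_
  · filter_upwards [hd.eventually_ge_atTop t] with n hn
    exact ⟨by rw [(γn n).dist_base_apply, NNReal.abs_eq],
      (γn n).dist_apply_eq_sub_of_mem_range (hγn n) hn⟩
  · exact (hGξ t t.2 w).1 (by rwa [NNReal.abs_eq] at hw)
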